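/- For all real numbers s and t with t > 0 and s > 1 + t, one has ∑_{n≥1} (R(n)^t / n^s) · (S(s,t) · ln R(n) − T(s,t) · ln n) = 0, the series being absolutely convergent. -/

import Mathlib

open scoped BigOperators

/-- The radical of a natural number: the product of its distinct prime factors. -/
def rad (n : ℕ) : ℕ := ∏ p ∈ n.primeFactors, p

/-- `S s t = ∑_p (p^s/(p^s − 1)) · (p^t/(p^s − 1 + p^t)) · ln p` over all primes `p`. -/
noncomputable def S (s t : ℝ) : ℝ :=
  ∑' p : Nat.Primes, (((p : ℕ) : ℝ) ^ s / (((p : ℕ) : ℝ) ^ s - 1)) *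
    (((p : ℕ) : ℝ) ^ t / (((p : ℕ) : ℝ) ^ s - 1 + ((p : ℕ) : ℝ) ^ t)) *
    Real.log ((p : ℕ) : ℝ)

/-- `T s t = ∑_p (p^t/(p^s − 1 + p^t)) · ln p` over all primes `p`. -/
noncomputable def T (s t : ℝ) : ℝ :=
  ∑' p : Nat.Primes, (((p : ℕ) : ℝ) ^ t / (((p : ℕ) : ℝ) ^ s - 1 + ((p : ℕ) : ℝ) ^ t)) *
    Real.log ((p : ℕ) : ℝ)

/-!
Write `w(n) = rad(n)^t / n^s` and `Z = ∑ w(n)`; `w` is multiplicative. Splitting `n = p^k m` with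
`p ∤ m` factors every sum `∑ c(v_p(n)) w(n)` as `(∑_k c(k) w(p^k)) · ∑_{p ∤ m} w(m)`, so it equals
`Z` times the ratio `∑_k c(k) w(p^k) / ∑_k w(p^k)` of two geometric-type series. For `c(k) = k`
this ratio is the `p`-th summand of `S`, for `c(k) = [k ≠ 0]` that of `T`. Since
`log n = ∑_p v_p(n) log p` and `log rad(n) = ∑_{p ∣ n} log p`, exchanging the nonnegative double
sums gives `∑ w(n) log n = Z S` and `∑ w(n) log rad(n) = Z T`, so the series sums to
`S Z T - T Z S = 0`.
-/

open Real

lemma rad_pos (n : ℕ) : 0 < rad n :=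
  Finset.prod_pos fun _ hp => (Nat.prime_of_mem_primeFactors hp).pos

lemma rad_le {n : ℕ} (hn : 0 < n) : rad n ≤ n :=
  Nat.le_of_dvd hn (Nat.prod_primeFactors_dvd n)

lemma rad_one : rad 1 = 1 := by simp [rad]

lemma rad_prime_pow {p k : ℕ} (hp : p.Prime) (hk : k ≠ 0) : rad (p ^ k) = p := by
  rw [rad, Nat.primeFactors_pow _ hk, hp.primeFactors, Finset.prod_singleton]

lemma rad_mul_of_coprime {a b : ℕ} (ha : a ≠ 0) (hb : b ≠ 0) (h : a.Coprime b) :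
    rad (a * b) = rad a * rad b := by
  rw [rad, Nat.primeFactors_mul ha hb, Finset.prod_union h.disjoint_primeFactors, rad, rad]

lemma log_rad (n : ℕ) : log (rad n) = ∑ p ∈ n.primeFactors, log p := by
  rw [rad, Nat.cast_prod, log_prod]
  exact fun p hp => Nat.cast_ne_zero.2 (Nat.prime_of_mem_primeFactors hp).ne_zero

lemma log_nat_eq_sum_primeFactors (n : ℕ) :
    log n = ∑ p ∈ n.primeFactors, n.factorization p * log p := by
  rw [log_nat_eq_sum_factorization, Finsupp.sum, Nat.support_factorization]

lemma factorization_prime_pow_mul {p k m : ℕ} (hp : p.Prime) (hm : ¬ p ∣ m) :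
    (p ^ k * m).factorization p = k := by
  have hm0 : m ≠ 0 := by rintro rfl; exact hm (dvd_zero p)
  rw [Nat.factorization_mul (pow_ne_zero _ hp.ne_zero) hm0]
  simp [hp.factorization_pow, Nat.factorization_eq_zero_of_not_dvd hm]

def primePowMulEquiv {p : ℕ} (hp : p.Prime) : ℕ × {m : ℕ+ // ¬ p ∣ m} ≃ ℕ+ where
  toFun km := ⟨p ^ km.1 * km.2.1, Nat.mul_pos (Nat.pow_pos hp.pos) km.2.1.pos⟩
  invFun n := ((n : ℕ).factorization p,
    ⟨⟨(n : ℕ) / p ^ (n : ℕ).factorization p, Nat.ordCompl_pos p n.ne_zero⟩,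
      Nat.not_dvd_ordCompl hp n.ne_zero⟩)
  left_inv := by
    rintro ⟨k, m, hm⟩
    have hk := factorization_prime_pow_mul (k := k) hp hm
    refine Prod.ext hk (Subtype.ext (PNat.coe_injective ?_))
    simp only [PNat.mk_coe, hk]
    exact Nat.mul_div_cancel_left _ (Nat.pow_pos hp.pos)
  right_inv n := PNat.coe_injective (Nat.ordProj_mul_ordCompl_eq_self n p)

lemma Summable.comp_prime_pow {g : ℕ → ℝ} (hg : Summable fun n : ℕ+ => g n) {p : ℕ}
    (hp : p.Prime) : Summable fun k => g (p ^ k) :=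
  hg.comp_injective (i := fun k : ℕ => (⟨p ^ k, Nat.pow_pos hp.pos⟩ : ℕ+))
    fun _ _ h => Nat.pow_right_injective hp.two_le (congrArg PNat.val h :)

section Multiplicative

variable {f : ℕ → ℝ} (hf0 : ∀ n, 0 ≤ f n)
  (hf : ∀ {a b : ℕ}, 0 < a → 0 < b → a.Coprime b → f (a * b) = f a * f b)
include hf0 hf

theorem hasSum_factorization_mul {p : ℕ} (hp : p.Prime) {c : ℕ → ℝ} (hc0 : ∀ k, 0 ≤ c k)
    (hc : Summable fun k => c k * f (p ^ k)) (hfs : Summable fun n : ℕ+ => f n) :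
    HasSum (fun n : ℕ+ => c ((n : ℕ).factorization p) * f n)
      ((∑' k, c k * f (p ^ k)) * ∑' m : {m : ℕ+ // ¬ p ∣ m}, f m) := by
  have hcoprime (k : ℕ) (m : {m : ℕ+ // ¬ p ∣ m}) : (p ^ k).Coprime m :=
    Nat.Coprime.pow_left k ((Nat.Prime.coprime_iff_not_dvd hp).2 m.2)
  have hterm (km : ℕ × {m : ℕ+ // ¬ p ∣ m}) :
      c ((primePowMulEquiv hp km : ℕ).factorization p) * f (primePowMulEquiv hp km) =
        c km.1 * f (p ^ km.1) * f km.2 := by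
    rw [show (primePowMulEquiv hp km : ℕ) = p ^ km.1 * km.2.1 from rfl,
      factorization_prime_pow_mul hp km.2.2, hf (Nat.pow_pos hp.pos) km.2.1.pos (hcoprime _ _),
      mul_assoc]
  have hfs' : Summable fun m : {m : ℕ+ // ¬ p ∣ m} => f m := hfs.subtype _
  have hprod := hc.mul_of_nonneg hfs' (fun k => mul_nonneg (hc0 k) (hf0 _)) (fun m => hf0 _)
  rw [← (primePowMulEquiv hp).hasSum_iff, Function.comp_def, funext hterm,
    hc.tsum_mul_tsum hfs' hprod]
  exact hprod.hasSum

theorem tsum_factorization_mul_mul_tsum {p : ℕ} (hp : p.Prime) {c : ℕ → ℝ}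
    (hc0 : ∀ k, 0 ≤ c k) (hc : Summable fun k => c k * f (p ^ k))
    (hfs : Summable fun n : ℕ+ => f n) :
    (∑' n : ℕ+, c ((n : ℕ).factorization p) * f n) * ∑' k, f (p ^ k) =
      (∑' k, c k * f (p ^ k)) * ∑' n : ℕ+, f n := by
  have hpow : Summable fun k => f (p ^ k) := hfs.comp_prime_pow hp
  have hone := hasSum_factorization_mul hf0 hf hp (c := fun _ => 1) (fun _ => zero_le_one)
    (by simpa using hpow) hfs
  simp only [one_mul] at hone
  rw [(hasSum_factorization_mul hf0 hf hp hc0 hc hfs).tsum_eq, hone.tsum_eq]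
  ring

end Multiplicative

section PrimeFactorSums

variable {f c : ℕ → ℝ} (hf0 : ∀ n, 0 ≤ f n) (hc0 : ∀ k, 0 ≤ c k) (hc : c 0 = 0)
  (hsum : Summable fun n : ℕ+ =>
    f n * ∑ p ∈ (n : ℕ).primeFactors, c ((n : ℕ).factorization p) * log p)
include hf0 hc0 hc hsum

theorem summable_factorization_mul {p : ℕ} (hp : p.Prime) :
    Summable fun n : ℕ+ => c ((n : ℕ).factorization p) * f n := by
  have hlogp : 0 < log p := log_pos (by exact_mod_cast hp.one_lt)
  refine (hsum.mul_left (log p)⁻¹).of_nonneg_of_le (fun n => mul_nonneg (hc0 _) (hf0 _))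
    fun n => ?_
  have hterm : c ((n : ℕ).factorization p) * log p ≤
      ∑ q ∈ (n : ℕ).primeFactors, c ((n : ℕ).factorization q) * log q := by
    have hnonneg : ∀ q ∈ (n : ℕ).primeFactors, 0 ≤ c ((n : ℕ).factorization q) * log q :=
      fun q hq => mul_nonneg (hc0 _) (log_nonneg (by
        exact_mod_cast (Nat.prime_of_mem_primeFactors hq).one_lt.le))
    by_cases hpn : p ∈ (n : ℕ).primeFactors
    · exact Finset.single_le_sum hnonneg hpn
    · rw [Nat.factorization_eq_zero_of_not_dvd fun h =>
        hpn (Nat.mem_primeFactors.2 ⟨hp, h, n.ne_zero⟩), hc, zero_mul]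
      exact Finset.sum_nonneg hnonneg
  calc c ((n : ℕ).factorization p) * f n
      = (log p)⁻¹ * (f n * (c ((n : ℕ).factorization p) * log p)) := by field_simp
    _ ≤ _ := by gcongr; exact hf0 n

theorem tsum_mul_sum_primeFactors_comm :
    ∑' n : ℕ+, f n * ∑ p ∈ (n : ℕ).primeFactors, c ((n : ℕ).factorization p) * log p =
      ∑' p : Nat.Primes, log p * ∑' n : ℕ+, c ((n : ℕ).factorization p) * f n := by
  set u : ℕ+ → Nat.Primes → ℝ := fun n q => log q * (c ((n : ℕ).factorization q) * f n)
  have hsupp (n : ℕ+) : ∀ q ∉ (n : ℕ).primeFactors.subtype Nat.Prime, u n q = 0 := by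
    intro q hq
    rw [Finset.mem_subtype, Nat.mem_primeFactors] at hq
    simp only [u, Nat.factorization_eq_zero_of_not_dvd fun h => hq ⟨q.2, h, n.ne_zero⟩, hc,
      zero_mul, mul_zero]
  have hrow (n : ℕ+) :
      ∑' q, u n q = f n * ∑ p ∈ (n : ℕ).primeFactors, c ((n : ℕ).factorization p) * log p := by
    refine (tsum_eq_sum (L := .unconditional _) (hsupp n)).trans ?_
    rw [Finset.sum_subtype_of_mem
      (fun p : ℕ => log p * (c ((n : ℕ).factorization p) * f n))
      fun p hp => Nat.prime_of_mem_primeFactors hp, Finset.mul_sum]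
    exact Finset.sum_congr rfl fun _ _ => by ring
  have hrows (n : ℕ+) : Summable (u n) := summable_of_ne_finset_zero (hsupp n)
  have hu : Summable (Function.uncurry u) := by
    refine (summable_prod_of_nonneg fun nq => ?_).2 ⟨hrows, hsum.congr fun n => (hrow n).symm⟩
    exact mul_nonneg (log_nonneg (by exact_mod_cast nq.2.2.one_lt.le))
      (mul_nonneg (hc0 _) (hf0 _))
  rw [← tsum_congr hrow, ← hu.tsum_comm' hrows fun q =>
    (summable_factorization_mul hf0 hc0 hc hsum q.2).mul_left _]
  exact tsum_congr fun q => tsum_mul_left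

end PrimeFactorSums

theorem tsum_mul_sum_primeFactors_eq {f c : ℕ → ℝ} (hf0 : ∀ n, 0 ≤ f n)
    (hf : ∀ {a b : ℕ}, 0 < a → 0 < b → a.Coprime b → f (a * b) = f a * f b) (hf1 : f 1 = 1)
    (hfs : Summable fun n : ℕ+ => f n) (hc0 : ∀ k, 0 ≤ c k) (hc : c 0 = 0)
    (hsum : Summable fun n : ℕ+ =>
      f n * ∑ p ∈ (n : ℕ).primeFactors, c ((n : ℕ).factorization p) * log p) :
    ∑' n : ℕ+, f n * ∑ p ∈ (n : ℕ).primeFactors, c ((n : ℕ).factorization p) * log p =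
      (∑' n : ℕ+, f n) *
        ∑' p : Nat.Primes, (∑' k, c k * f (p ^ k)) / (∑' k, f (p ^ k)) * log p := by
  rw [tsum_mul_sum_primeFactors_comm hf0 hc0 hc hsum, ← tsum_mul_left]
  refine tsum_congr fun p => ?_
  have hcpow : Summable fun k => c k * f (p ^ k) := by
    have := Summable.comp_prime_pow (g := fun n => c (n.factorization p) * f n)
      (summable_factorization_mul hf0 hc0 hc hsum p.2) p.2
    simpa only [p.2.factorization_pow, Finsupp.single_eq_same] using this
  have hpow_pos : 0 < ∑' k, f (p ^ k) := by
    have := (hfs.comp_prime_pow p.2).le_tsum 0 fun j _ => hf0 (p ^ j)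
    rw [pow_zero, hf1] at this
    linarith
  have hfactor := tsum_factorization_mul_mul_tsum hf0 hf p.2 hc0 hcpow hfs
  field_simp
  linear_combination log p * hfactor

noncomputable def radWeight (s t : ℝ) (n : ℕ) : ℝ := (rad n : ℝ) ^ t / (n : ℝ) ^ s

section RadWeight

variable {s t : ℝ}

lemma radWeight_nonneg (n : ℕ) : 0 ≤ radWeight s t n := by
  unfold radWeight; positivity

lemma radWeight_one : radWeight s t 1 = 1 := by simp [radWeight, rad_one]

lemma radWeight_mul {a b : ℕ} (ha : 0 < a) (hb : 0 < b) (h : a.Coprime b) :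
    radWeight s t (a * b) = radWeight s t a * radWeight s t b := by
  simp only [radWeight, rad_mul_of_coprime ha.ne' hb.ne' h, Nat.cast_mul]
  rw [mul_rpow (by positivity) (by positivity), mul_rpow (by positivity) (by positivity)]
  ring

lemma radWeight_prime_pow {p k : ℕ} (hp : p.Prime) (hk : k ≠ 0) :
    radWeight s t (p ^ k) = (p : ℝ) ^ t * ((p : ℝ) ^ s)⁻¹ ^ k := by
  rw [radWeight, rad_prime_pow hp hk, Nat.cast_pow, ← rpow_natCast, ← rpow_mul (by positivity),
    mul_comm, rpow_mul (by positivity), rpow_natCast, div_eq_mul_inv, inv_pow]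

lemma radWeight_le_rpow (ht : 0 ≤ t) {n : ℕ} (hn : 0 < n) :
    radWeight s t n ≤ (n : ℝ) ^ (t - s) := by
  have hn' : (0 : ℝ) < n := by exact_mod_cast hn
  rw [rpow_sub hn', radWeight]
  gcongr
  exact_mod_cast rad_le hn

lemma summable_radWeight (ht : 0 ≤ t) (hs : 1 + t < s) :
    Summable fun n : ℕ+ => radWeight s t n :=
  ((summable_nat_rpow.2 (by linarith)).comp_injective PNat.coe_injective).of_nonneg_of_le
    (fun _ => radWeight_nonneg _) fun n => radWeight_le_rpow ht n.pos

lemma summable_radWeight_mul_log (ht : 0 ≤ t) (hs : 1 + t < s) :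
    Summable fun n : ℕ+ => radWeight s t n * log n := by
  set ε := (s - t - 1) / 2
  have hε : 0 < ε := by simp only [ε]; linarith
  have hbound (n : ℕ+) : radWeight s t n * log n ≤ ε⁻¹ * (n : ℝ) ^ (t - s + ε) := by
    have hn : (0 : ℝ) < n := by exact_mod_cast n.pos
    calc radWeight s t n * log n ≤ (n : ℝ) ^ (t - s) * ((n : ℝ) ^ ε / ε) :=
          mul_le_mul (radWeight_le_rpow ht n.pos) (log_le_rpow_div hn.le hε)
            (log_natCast_nonneg n) (by positivity)
      _ = ε⁻¹ * (n : ℝ) ^ (t - s + ε) := by rw [rpow_add hn]; ring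
  refine (((summable_nat_rpow.2 ?_).comp_injective PNat.coe_injective).mul_left _).of_nonneg_of_le
    (fun n => mul_nonneg (radWeight_nonneg _) (log_natCast_nonneg n)) hbound
  simp only [ε]; linarith

lemma summable_radWeight_mul_log_rad (ht : 0 ≤ t) (hs : 1 + t < s) :
    Summable fun n : ℕ+ => radWeight s t n * log (rad n) :=
  (summable_radWeight_mul_log ht hs).of_nonneg_of_le
    (fun _ => mul_nonneg (radWeight_nonneg _) (log_natCast_nonneg _)) fun n =>
      mul_le_mul_of_nonneg_left (log_le_log (by exact_mod_cast rad_pos n)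
        (by exact_mod_cast rad_le n.pos)) (radWeight_nonneg _)

end RadWeight

section PrimePowers

variable {s t : ℝ} {p : ℕ} (hp : p.Prime) (hs : 0 < s)
include hp hs

lemma one_lt_prime_rpow : 1 < (p : ℝ) ^ s :=
  one_lt_rpow (by exact_mod_cast hp.one_lt) hs

lemma hasSum_radWeight_prime_pow_succ :
    HasSum (fun k => radWeight s t (p ^ (k + 1))) ((p : ℝ) ^ t / ((p : ℝ) ^ s - 1)) := by
  have hx := one_lt_prime_rpow hp hs
  have hgeom := (hasSum_geometric_of_lt_one (inv_nonneg.2 (by linarith))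
    (inv_lt_one_of_one_lt₀ hx)).mul_left ((p : ℝ) ^ t * ((p : ℝ) ^ s)⁻¹)
  have hterm : (fun k => radWeight s t (p ^ (k + 1))) =
      fun k => (p : ℝ) ^ t * ((p : ℝ) ^ s)⁻¹ * ((p : ℝ) ^ s)⁻¹ ^ k := by
    funext k; rw [radWeight_prime_pow hp k.succ_ne_zero, pow_succ]; ring
  have hsum : (p : ℝ) ^ t * ((p : ℝ) ^ s)⁻¹ * (1 - ((p : ℝ) ^ s)⁻¹)⁻¹ =
      (p : ℝ) ^ t / ((p : ℝ) ^ s - 1) := by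
    have : (p : ℝ) ^ s - 1 ≠ 0 := by linarith
    field_simp
  rwa [hterm, ← hsum]

lemma hasSum_radWeight_prime_pow :
    HasSum (fun k => radWeight s t (p ^ k)) (1 + (p : ℝ) ^ t / ((p : ℝ) ^ s - 1)) := by
  have h := HasSum.zero_add (f := fun k => radWeight s t (p ^ k))
    (hasSum_radWeight_prime_pow_succ hp hs)
  rwa [pow_zero, radWeight_one] at h

lemma hasSum_ite_mul_radWeight_prime_pow :
    HasSum (fun k => (if k = 0 then 0 else 1) * radWeight s t (p ^ k))
      ((p : ℝ) ^ t / ((p : ℝ) ^ s - 1)) := by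
  have h := HasSum.zero_add (f := fun k => (if k = 0 then 0 else 1) * radWeight s t (p ^ k))
    (by simpa only [Nat.add_one_ne_zero, if_false, one_mul]
      using hasSum_radWeight_prime_pow_succ hp hs)
  rwa [if_pos rfl, zero_mul, zero_add] at h

lemma hasSum_natCast_mul_radWeight_prime_pow :
    HasSum (fun k : ℕ => (k : ℝ) * radWeight s t (p ^ k))
      ((p : ℝ) ^ t * (p : ℝ) ^ s / ((p : ℝ) ^ s - 1) ^ 2) := by
  have hx := one_lt_prime_rpow hp hs
  have hnorm : ‖((p : ℝ) ^ s)⁻¹‖ < 1 := by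
    rw [norm_inv, Real.norm_of_nonneg (by linarith)]; exact inv_lt_one_of_one_lt₀ hx
  have hterm : (fun k : ℕ => (k : ℝ) * radWeight s t (p ^ k)) =
      fun k : ℕ => (p : ℝ) ^ t * ((k : ℝ) * ((p : ℝ) ^ s)⁻¹ ^ k) := by
    funext k
    rcases eq_or_ne k 0 with rfl | hk
    · simp
    · rw [radWeight_prime_pow hp hk]; ring
  have hsum : (p : ℝ) ^ t * (((p : ℝ) ^ s)⁻¹ / (1 - ((p : ℝ) ^ s)⁻¹) ^ 2) =
      (p : ℝ) ^ t * (p : ℝ) ^ s / ((p : ℝ) ^ s - 1) ^ 2 := by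
    have : (p : ℝ) ^ s - 1 ≠ 0 := by linarith
    field_simp
  rw [hterm, ← hsum]
  exact (hasSum_coe_mul_geometric_of_norm_lt_one hnorm).mul_left _

lemma tsum_natCast_mul_radWeight_prime_pow_div :
    (∑' k : ℕ, (k : ℝ) * radWeight s t (p ^ k)) / ∑' k, radWeight s t (p ^ k) =
      (p : ℝ) ^ s / ((p : ℝ) ^ s - 1) * ((p : ℝ) ^ t / ((p : ℝ) ^ s - 1 + (p : ℝ) ^ t)) := by
  have hx := one_lt_prime_rpow hp hs
  have hQ : 0 < (p : ℝ) ^ t := rpow_pos_of_pos (by exact_mod_cast hp.pos) t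
  have h1 : (p : ℝ) ^ s - 1 ≠ 0 := by linarith
  have h2 : (p : ℝ) ^ s - 1 + (p : ℝ) ^ t ≠ 0 := by linarith
  rw [(hasSum_natCast_mul_radWeight_prime_pow hp hs).tsum_eq,
    (hasSum_radWeight_prime_pow hp hs).tsum_eq]
  field_simp

lemma tsum_ite_mul_radWeight_prime_pow_div :
    (∑' k, (if k = 0 then 0 else 1) * radWeight s t (p ^ k)) / ∑' k, radWeight s t (p ^ k) =
      (p : ℝ) ^ t / ((p : ℝ) ^ s - 1 + (p : ℝ) ^ t) := by
  have hx := one_lt_prime_rpow hp hs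
  have hQ : 0 < (p : ℝ) ^ t := rpow_pos_of_pos (by exact_mod_cast hp.pos) t
  have h1 : (p : ℝ) ^ s - 1 ≠ 0 := by linarith
  have h2 : (p : ℝ) ^ s - 1 + (p : ℝ) ^ t ≠ 0 := by linarith
  rw [(hasSum_ite_mul_radWeight_prime_pow hp hs).tsum_eq,
    (hasSum_radWeight_prime_pow hp hs).tsum_eq]
  field_simp

end PrimePowers

section Global

variable {s t : ℝ} (ht : 0 ≤ t) (hs : 1 + t < s)
include ht hs

theorem tsum_radWeight_mul_log :
    ∑' n : ℕ+, radWeight s t n * log n = (∑' n : ℕ+, radWeight s t n) * S s t := by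
  have hrow (n : ℕ+) : radWeight s t n * log n =
      radWeight s t n * ∑ p ∈ (n : ℕ).primeFactors, ((n : ℕ).factorization p : ℝ) * log p := by
    rw [log_nat_eq_sum_primeFactors]
  rw [tsum_congr hrow, tsum_mul_sum_primeFactors_eq radWeight_nonneg radWeight_mul radWeight_one
    (summable_radWeight ht hs) (fun k => k.cast_nonneg) Nat.cast_zero
    ((summable_radWeight_mul_log ht hs).congr hrow), S]
  congr 1
  exact tsum_congr fun p => by
    rw [tsum_natCast_mul_radWeight_prime_pow_div p.2 (by linarith)]

theorem tsum_radWeight_mul_log_rad :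
    ∑' n : ℕ+, radWeight s t n * log (rad n) = (∑' n : ℕ+, radWeight s t n) * T s t := by
  have hrow (n : ℕ+) : radWeight s t n * log (rad n) = radWeight s t n *
      ∑ p ∈ (n : ℕ).primeFactors, (if (n : ℕ).factorization p = 0 then 0 else 1) * log p := by
    rw [log_rad]
    refine congrArg _ (Finset.sum_congr rfl fun p hp => ?_)
    rw [← Nat.support_factorization, Finsupp.mem_support_iff] at hp
    rw [if_neg hp, one_mul]
  rw [tsum_congr hrow, tsum_mul_sum_primeFactors_eq (c := fun k => if k = 0 then 0 else 1)
    radWeight_nonneg radWeight_mul radWeight_one (summable_radWeight ht hs)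
    (fun k => by split_ifs <;> norm_num) (if_pos rfl)
    ((summable_radWeight_mul_log_rad ht hs).congr hrow), T]
  congr 1
  exact tsum_congr fun p => by
    rw [tsum_ite_mul_radWeight_prime_pow_div p.2 (by linarith)]

end Global

theorem stmt_8 (s t : ℝ) (ht : 0 < t) (hs : 1 + t < s) :
    Summable (fun n : ℕ+ =>
      |((rad n : ℝ) ^ t / (n : ℝ) ^ s) *
        (S s t * Real.log (rad n : ℝ) - T s t * Real.log (n : ℝ))|) ∧
    (∑' n : ℕ+, ((rad n : ℝ) ^ t / (n : ℝ) ^ s) *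
        (S s t * Real.log (rad n : ℝ) - T s t * Real.log (n : ℝ))) = 0 := by
  have hrad := summable_radWeight_mul_log_rad ht.le hs
  have hlog := summable_radWeight_mul_log ht.le hs
  have hsplit (n : ℕ+) : radWeight s t n * (S s t * log (rad n) - T s t * log n) =
      S s t * (radWeight s t n * log (rad n)) - T s t * (radWeight s t n * log n) := by ring
  change Summable (fun n : ℕ+ => |radWeight s t n * (S s t * log (rad n) - T s t * log n)|) ∧
    ∑' n : ℕ+, radWeight s t n * (S s t * log (rad n) - T s t * log n) = 0
  simp only [hsplit]
  refine ⟨((hrad.mul_left _).sub (hlog.mul_left _)).abs, ?_⟩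
  rw [(hrad.mul_left _).tsum_sub (hlog.mul_left _), tsum_mul_left, tsum_mul_left,
    tsum_radWeight_mul_log ht.le hs, tsum_radWeight_mul_log_rad ht.le hs]
  ring
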